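/- arXiv:1804.04244 — 9 statements merged into one kernel-verified Lean document; each statement's English description precedes it below -/
import Mathlib

section
/- Given a pair of adjunctions L ⊣ R : A → B and F ⊣ G : C → B, and an object C ∈ C, the following are equivalent: (1) there exists A ∈ A such that the unit η_A : A → RLA is an isomorphism and LA ≅ FC in B; (2) the counit ε_{FC} : LRFC → FC is an isomorphism. -/
open CategoryTheory

namespace CategoryTheory.Adjunction

variable {A B : Type*} [Category A] [Category B] {L : A ⥤ B} {R : B ⥤ A} (adj : L ⊣ R)

lemma isIso_counit_app_obj_of_isIso_unit_app (a : A) [IsIso (adj.unit.app a)] :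
    IsIso (adj.counit.app (L.obj a)) :=
  isIso_of_hom_comp_eq_id _ (adj.left_triangle_components a)

lemma isIso_unit_app_obj_of_isIso_counit_app (b : B) [IsIso (adj.counit.app b)] :
    IsIso (adj.unit.app (R.obj b)) :=
  isIso_of_comp_hom_eq_id _ (adj.right_triangle_components b)

lemma isIso_counit_app_iff_exists_isIso_unit_app (b : B) :
    IsIso (adj.counit.app b) ↔ ∃ a : A, IsIso (adj.unit.app a) ∧ Nonempty (L.obj a ≅ b) := by
  constructor
  · intro
    exact ⟨R.obj b, adj.isIso_unit_app_obj_of_isIso_counit_app b, ⟨asIso (adj.counit.app b)⟩⟩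
  · rintro ⟨a, _, ⟨e⟩⟩
    rw [NatTrans.isIso_app_iff_of_iso _ e.symm]
    exact adj.isIso_counit_app_obj_of_isIso_unit_app a

end CategoryTheory.Adjunction

theorem stmt1_general {A B C : Type*} [Category A] [Category B] [Category C]
    (L : A ⥤ B) (R : B ⥤ A) (adj1 : L ⊣ R)
    (F : C ⥤ B) (c : C) :
    (∃ a : A, IsIso (adj1.unit.app a) ∧ Nonempty (L.obj a ≅ F.obj c)) ↔
      IsIso (adj1.counit.app (F.obj c)) :=
  (adj1.isIso_counit_app_iff_exists_isIso_unit_app (F.obj c)).symm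

/-- Proposition 3.3 (abstracto2), (1) ⟺ (2): for adjunctions `L ⊣ R` and `F ⊣ G`
and an object `c`, there exists `a` with `η_a` an isomorphism and `L a ≅ F c`
iff the counit `ε_{Fc} : LRFc ⟶ Fc` is an isomorphism. -/
theorem stmt1 {A B C : Type*} [Category A] [Category B] [Category C]
    (L : A ⥤ B) (R : B ⥤ A) (adj1 : L ⊣ R)
    (F : C ⥤ B) (G : B ⥤ C) (adj2 : F ⊣ G) (c : C) :
    (∃ a : A, IsIso (adj1.unit.app a) ∧ Nonempty (L.obj a ≅ F.obj c)) ↔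
      IsIso (adj1.counit.app (F.obj c)) :=
  stmt1_general L R adj1 F c
end

section
/- Let C be a category and Σ a family of arrows of C with localization functor P_Σ : C → C[Σ⁻¹]. Then there exists a congruence R on C such that the quotient functor Q_R : C → C/R is isomorphic to P_Σ in the coslice category C ↓ Cat if and only if P_Σ is a strict epimorphism of categories, if and only if every arrow of Σ becomes a homotopy equivalence with respect to the relation ρΣ (where f ρΣ g iff P_Σ f = P_Σ g), i.e. Σ ⊆ σρΣ. -/
open CategoryTheory

variable {C : Type*} [Category C]

/-- `Q_R` and `P_Σ` are isomorphic in the coslice `C ↓ Cat`. -/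
def QuotIsoLoc (R : HomRel C) (S : MorphismProperty C) : Prop :=
  ∃ (φ : Quotient R ⥤ S.Localization) (ψ : S.Localization ⥤ CategoryTheory.Quotient R),
    CategoryTheory.Quotient.functor R ⋙ φ = S.Q ∧ S.Q ⋙ ψ = CategoryTheory.Quotient.functor R ∧
    φ ⋙ ψ = 𝟭 (CategoryTheory.Quotient R) ∧ ψ ⋙ φ = 𝟭 S.Localization

/-- `ρΣ`: the kernel-pair congruence of the localization functor `P_Σ`. -/
def rhoRel (S : MorphismProperty C) : HomRel C :=
  fun {_ _} f g => S.Q.map f = S.Q.map g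

/-- `P_Σ` is a strict epimorphism: the comparison functor `C/ρΣ ⟶ C[Σ⁻¹]` induced by
the image factorization is an isomorphism of categories. -/
def StrictEpiLoc (S : MorphismProperty C) : Prop :=
  ∃ ψ : S.Localization ⥤ CategoryTheory.Quotient (rhoRel S),
    (CategoryTheory.Quotient.lift (rhoRel S) S.Q (fun _ _ _ _ h => h)) ⋙ ψ = 𝟭 (CategoryTheory.Quotient (rhoRel S)) ∧
    ψ ⋙ (CategoryTheory.Quotient.lift (rhoRel S) S.Q (fun _ _ _ _ h => h)) = 𝟭 S.Localization

/-- `ρΣ` is a congruence. -/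
lemma rhoRel_congruence (S : MorphismProperty C) : CategoryTheory.Congruence (rhoRel S) where
  equivalence := ⟨fun _ => rfl, Eq.symm, Eq.trans⟩
  comp_left := by
    intro X Y Z f g g' h
    simp only [rhoRel, Functor.map_comp] at h ⊢; rw [h]
  comp_right := by
    intro X Y Z f f' g h
    simp only [rhoRel, Functor.map_comp] at h ⊢; rw [h]

/-- (1) → (3). -/
lemma aux13 (S : MorphismProperty C)
    (h : ∃ R : HomRel C, CategoryTheory.Congruence R ∧ QuotIsoLoc R S) :
    ∀ ⦃X Y : C⦄ (f : X ⟶ Y), S f →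
      ∃ g : Y ⟶ X, S.Q.map (f ≫ g) = S.Q.map (𝟙 X) ∧ S.Q.map (g ≫ f) = S.Q.map (𝟙 Y) := by
  obtain ⟨R, -, φ, ψ, h₁, h₂, h₃, h₄⟩ := h
  intro X Y f hf
  haveI : IsIso (S.Q.map f) := S.Q_inverts f hf
  haveI : IsIso ((CategoryTheory.Quotient.functor R).map f) := by
    rw [← h₂]
    simp only [Functor.comp_map]
    infer_instance
  obtain ⟨g, hg⟩ := (CategoryTheory.Quotient.functor R).map_surjective
    (inv ((CategoryTheory.Quotient.functor R).map f))
  refine ⟨g, ?_, ?_⟩ <;> rw [← h₁] <;>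
    simp [Functor.comp_map, Functor.map_comp, hg]

/-- (3) → (2). -/
lemma aux32 (S : MorphismProperty C)
    (h : ∀ ⦃X Y : C⦄ (f : X ⟶ Y), S f →
      ∃ g : Y ⟶ X, S.Q.map (f ≫ g) = S.Q.map (𝟙 X) ∧ S.Q.map (g ≫ f) = S.Q.map (𝟙 Y)) :
    StrictEpiLoc S := by
  have hinv : S.IsInvertedBy (CategoryTheory.Quotient.functor (rhoRel S)) := by
    intro X Y f hf
    obtain ⟨g, hg₁, hg₂⟩ := h f hf
    refine ⟨⟨(CategoryTheory.Quotient.functor (rhoRel S)).map g, ?_, ?_⟩⟩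
    · rw [← Functor.map_comp, ← (CategoryTheory.Quotient.functor (rhoRel S)).map_id X]
      exact CategoryTheory.Quotient.sound _ hg₁
    · rw [← Functor.map_comp, ← (CategoryTheory.Quotient.functor (rhoRel S)).map_id Y]
      exact CategoryTheory.Quotient.sound _ hg₂
  refine ⟨Localization.Construction.lift _ hinv, ?_, ?_⟩
  · apply CategoryTheory.Quotient.lift_unique'
    erw [← Functor.assoc, CategoryTheory.Quotient.lift_spec,
      Localization.Construction.fac, Functor.comp_id]
  · apply Localization.Construction.uniq
    erw [← Functor.assoc, Localization.Construction.fac,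
      CategoryTheory.Quotient.lift_spec]

/-- (2) → (1). -/
lemma aux21 (S : MorphismProperty C) (h : StrictEpiLoc S) :
    ∃ R : HomRel C, CategoryTheory.Congruence R ∧ QuotIsoLoc R S := by
  obtain ⟨ψ, h₁, h₂⟩ := h
  refine ⟨rhoRel S, rhoRel_congruence S,
    CategoryTheory.Quotient.lift (rhoRel S) S.Q (fun _ _ _ _ h => h), ψ,
    CategoryTheory.Quotient.lift_spec _ _ _, ?_, h₁, h₂⟩
  rw [← CategoryTheory.Quotient.lift_spec (rhoRel S) S.Q (fun _ _ _ _ h => h),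
    Functor.assoc, h₁, Functor.comp_id]

/-- Corollary 3.7 (concreto2): the following are equivalent for a family `Σ` of arrows:
(1) there is a congruence `R` with `Q_R ≅ P_Σ` in `C ↓ Cat`;
(2) `P_Σ` is a strict epimorphism;
(3) every arrow of `Σ` is a homotopy equivalence with respect to `ρΣ`, i.e. `Σ ⊆ σρΣ`. -/
theorem stmt3 (S : MorphismProperty C) :
    ((∃ R : HomRel C, CategoryTheory.Congruence R ∧ QuotIsoLoc R S) ↔ StrictEpiLoc S) ∧
    (StrictEpiLoc S ↔ ∀ ⦃X Y : C⦄ (f : X ⟶ Y), S f →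
      ∃ g : Y ⟶ X, S.Q.map (f ≫ g) = S.Q.map (𝟙 X) ∧ S.Q.map (g ≫ f) = S.Q.map (𝟙 Y)) := by
  exact ⟨⟨fun h => aux32 S (aux13 S h), aux21 S⟩,
    ⟨fun h => aux13 S (aux21 S h), aux32 S⟩⟩
end

section
/- Let (C, W) be a category with weak equivalences such that every weak equivalence is a composition of weak equivalences that are split (i.e. sections or retractions). Then every weak equivalence f : X → Y is a homotopy equivalence: there exists g : Y → X with γ(gf) = id_X and γ(fg) = id_Y in the localization Ho(C), i.e. gf ∼_W id_X and fg ∼_W id_Y. -/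
open CategoryTheory

variable {C : Type*} [Category C]

/-- Arrows that are finite composites of split weak equivalences. -/
inductive SplitGenChain (W : MorphismProperty C) : ∀ {X Y : C}, (X ⟶ Y) → Prop
  | of {X Y : C} (f : X ⟶ Y) (hW : W f) (hs : IsSplitMono f ∨ IsSplitEpi f) :
      SplitGenChain W f
  | comp {X Y Z : C} {f : X ⟶ Y} {g : Y ⟶ Z} :
      SplitGenChain W f → SplitGenChain W g → SplitGenChain W (f ≫ g)

/-- A category with weak equivalences is split-generated when every weak equivalence is a
finite composite of split weak equivalences. -/
def SplitGenerated (W : MorphismProperty C) : Prop :=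
  ∀ ⦃X Y : C⦄ (f : X ⟶ Y), W f → SplitGenChain W f

/-! Once a split arrow becomes invertible under a functor, its one-sided inverse is carried to the
two-sided inverse. Two-sided inverses compose, so a finite composite of split weak equivalences
has a two-sided inverse up to any functor inverting the weak equivalences, such as `W.Q`. -/

section

variable {D : Type*} [Category D]

lemma CategoryTheory.IsSplitMono.map_retraction_eq_inv (F : C ⥤ D) {X Y : C} (f : X ⟶ Y)
    [IsSplitMono f] [IsIso (F.map f)] : F.map (retraction f) = inv (F.map f) :=
  IsIso.eq_inv_of_hom_inv_id <| by rw [← F.map_comp, IsSplitMono.id, F.map_id]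

lemma CategoryTheory.IsSplitEpi.map_section_eq_inv (F : C ⥤ D) {X Y : C} (f : X ⟶ Y)
    [IsSplitEpi f] [IsIso (F.map f)] : F.map (section_ f) = inv (F.map f) :=
  IsIso.eq_inv_of_inv_hom_id <| by rw [← F.map_comp, IsSplitEpi.id, F.map_id]

lemma SplitGenChain.exists_map_inverse {W : MorphismProperty C} (F : C ⥤ D)
    (hF : W.IsInvertedBy F) {X Y : C} {f : X ⟶ Y} (h : SplitGenChain W f) :
    ∃ g : Y ⟶ X, F.map (f ≫ g) = 𝟙 _ ∧ F.map (g ≫ f) = 𝟙 _ := by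
  induction h with
  | of f hW hs =>
    have := hF f hW
    rcases hs with hs | hs
    · exact ⟨retraction f, by simp, by simp [IsSplitMono.map_retraction_eq_inv]⟩
    · exact ⟨section_ f, by simp [IsSplitEpi.map_section_eq_inv], by simp⟩
  | comp _ _ ihf ihg =>
    obtain ⟨f', hff', hf'f⟩ := ihf
    obtain ⟨g', hgg', hg'g⟩ := ihg
    simp only [Functor.map_comp] at hff' hf'f hgg' hg'g
    refine ⟨g' ≫ f', ?_, ?_⟩
    · simp only [Functor.map_comp, Category.assoc]
      rw [reassoc_of% hgg', hff']
    · simp only [Functor.map_comp, Category.assoc]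
      rw [reassoc_of% hf'f, hg'g]

end

theorem stmt6_general (W : MorphismProperty C) (hsg : SplitGenerated W)
    {X Y : C} (f : X ⟶ Y) (hf : W f) :
    ∃ g : Y ⟶ X, W.Q.map (f ≫ g) = W.Q.map (𝟙 X) ∧ W.Q.map (g ≫ f) = W.Q.map (𝟙 Y) := by
  obtain ⟨g, hfg, hgf⟩ := (hsg f hf).exists_map_inverse W.Q (Localization.inverts W.Q W)
  exact ⟨g, by rw [hfg, W.Q.map_id], by rw [hgf, W.Q.map_id]⟩

/-- Proposition 3.14, Whitehead condition (3): in a split-generated category with weak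
equivalences, every weak equivalence `f : X ⟶ Y` is a homotopy equivalence: there is
`g : Y ⟶ X` with `gf ∼_W id_X` and `fg ∼_W id_Y`, i.e. `γ(gf) = id` and `γ(fg) = id`. -/
theorem stmt6 (W : MorphismProperty C) [W.ContainsIdentities]
    [W.HasTwoOutOfThreeProperty] (hsg : SplitGenerated W)
    {X Y : C} (f : X ⟶ Y) (hf : W f) :
    ∃ g : Y ⟶ X, W.Q.map (f ≫ g) = W.Q.map (𝟙 X) ∧ W.Q.map (g ≫ f) = W.Q.map (𝟙 Y) :=
  stmt6_general W hsg f hf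
end

section
/- Let (C, W) be a split-generated category with weak equivalences. Then the three congruences ∼_ℓ, ∼_r, and ∼_W on C coincide, where ∼_ℓ (resp. ∼_r) is the least congruence containing the relation: f R_ℓ g iff there is a weak equivalence σ : B → C with σf = σg (resp. f R_r g iff there is a weak equivalence s : C → A with fs = gs), and f ∼_W g iff γf = γg in the localization. -/
open CategoryTheory

variable {C : Type*} [Category C]

/-- `f R_ℓ g` iff there is a weak equivalence `σ` with `σf = σg`. -/
def Rl (W : MorphismProperty C) : HomRel C :=
  fun {_ B} f g => ∃ (Z : C) (σ : B ⟶ Z), W σ ∧ f ≫ σ = g ≫ σ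

/-- `f R_r g` iff there is a weak equivalence `s` with `fs = gs`. -/
def Rr (W : MorphismProperty C) : HomRel C :=
  fun {A _} f g => ∃ (Z : C) (s : Z ⟶ A), W s ∧ s ≫ f = s ≫ g

/-- The least congruence containing a `HomRel`, as the kernel of the quotient functor. -/
def leastCong (R : HomRel C) : HomRel C :=
  fun {_ _} f g =>
    (CategoryTheory.Quotient.functor R).map f = (CategoryTheory.Quotient.functor R).map g

/-!
A retract pair `i ≫ p = 𝟙` of weak equivalences makes the idempotent `p ≫ i` related to the
identity both by `R_ℓ` (witness `p`) and by `R_r` (witness `i`), so each quotient by `∼_ℓ`, `∼_r`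
inverts the split weak equivalences, hence, by split generation, all of `W`. The universal
property of the localization then gives `∼_W ⊆ ∼_ℓ, ∼_r`, and the converse inclusions hold
because `γ` inverts the witnesses of `R_ℓ` and `R_r`.
-/

section

variable (W : MorphismProperty C)

lemma Rl_retraction_comp_self {A B : C} {i : A ⟶ B} {p : B ⟶ A} (hp : W p)
    (hip : i ≫ p = 𝟙 A) :
    Rl W (p ≫ i) (𝟙 B) :=
  ⟨A, p, hp, by rw [Category.assoc, hip, Category.comp_id, Category.id_comp]⟩

lemma Rr_retraction_comp_self {A B : C} {i : A ⟶ B} {p : B ⟶ A} (hi : W i)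
    (hip : i ≫ p = 𝟙 A) :
    Rr W (p ≫ i) (𝟙 B) :=
  ⟨A, i, hi, by rw [← Category.assoc, hip, Category.id_comp, Category.comp_id]⟩

variable {W}

lemma map_eq_of_Rl {D : Type*} [Category D] {L : C ⥤ D} (hL : W.IsInvertedBy L)
    {X Y : C} {f g : X ⟶ Y} (h : Rl W f g) : L.map f = L.map g := by
  obtain ⟨_, σ, hσ, hfg⟩ := h
  have := hL σ hσ
  simpa only [Functor.map_comp, cancel_mono] using congrArg L.map hfg

lemma map_eq_of_Rr {D : Type*} [Category D] {L : C ⥤ D} (hL : W.IsInvertedBy L)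
    {X Y : C} {f g : X ⟶ Y} (h : Rr W f g) : L.map f = L.map g := by
  obtain ⟨_, s, hs, hfg⟩ := h
  have := hL s hs
  simpa only [Functor.map_comp, cancel_epi] using congrArg L.map hfg

lemma SplitGenChain.isIso_map {D : Type*} [Category D] (F : C ⥤ D)
    (hF : ∀ ⦃X Y : C⦄ (f : X ⟶ Y), W f → IsSplitMono f ∨ IsSplitEpi f → IsIso (F.map f))
    {X Y : C} {f : X ⟶ Y} (hf : SplitGenChain W f) : IsIso (F.map f) := by
  induction hf with
  | of f hW hs => exact hF f hW hs
  | comp _ _ ihf ihg => rw [F.map_comp]; infer_instance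

def quotientRetractIso (R : HomRel C) {A B : C} {i : A ⟶ B} {p : B ⟶ A} (hip : i ≫ p = 𝟙 A)
    (hpi : R (p ≫ i) (𝟙 B)) :
    (Quotient.functor R).obj A ≅ (Quotient.functor R).obj B where
  hom := (Quotient.functor R).map i
  inv := (Quotient.functor R).map p
  hom_inv_id := by rw [← Functor.map_comp, hip, (Quotient.functor R).map_id]
  inv_hom_id := by
    rw [← Functor.map_comp, CategoryTheory.Quotient.sound R hpi, (Quotient.functor R).map_id]

lemma isInvertedBy_quotient_functor [W.ContainsIdentities] [W.HasTwoOutOfThreeProperty]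
    (hsg : SplitGenerated W) (R : HomRel C)
    (hR : ∀ ⦃A B : C⦄ (i : A ⟶ B) (p : B ⟶ A), W i → W p → i ≫ p = 𝟙 A → R (p ≫ i) (𝟙 B)) :
    W.IsInvertedBy (Quotient.functor R) := by
  refine fun X Y f hf => (hsg f hf).isIso_map _ fun X Y f hW hs => ?_
  rcases hs with hs | hs
  · have hfr : f ≫ retraction f = 𝟙 X := IsSplitMono.id f
    have hrW : W (retraction f) :=
      W.of_precomp f (retraction f) hW (by rw [hfr]; exact W.id_mem X)
    exact (quotientRetractIso R hfr (hR _ _ hW hrW hfr)).isIso_hom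
  · have hsf : section_ f ≫ f = 𝟙 Y := IsSplitEpi.id f
    have hsW : W (section_ f) :=
      W.of_postcomp (section_ f) f hW (by rw [hsf]; exact W.id_mem Y)
    exact (quotientRetractIso R hsf (hR _ _ hsW hW hsf)).isIso_inv

lemma leastCong_iff_Q_map_eq {R : HomRel C}
    (hR : ∀ ⦃X Y : C⦄ (f g : X ⟶ Y), R f g → W.Q.map f = W.Q.map g)
    (hinv : W.IsInvertedBy (Quotient.functor R)) {X Y : C} (f g : X ⟶ Y) :
    leastCong R f g ↔ W.Q.map f = W.Q.map g := by
  constructor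
  · intro h
    rw [← Quotient.lift_map_functor_map R W.Q hR f,
      ← Quotient.lift_map_functor_map R W.Q hR g, h]
  · intro h
    change (Quotient.functor R).map f = (Quotient.functor R).map g
    rw [← Localization.Construction.fac (Quotient.functor R) hinv]
    exact congrArg (Localization.Construction.lift _ hinv).map h

end

/-- Proposition 3.18: in a split-generated category with weak equivalences, the congruences
`∼_ℓ`, `∼_r` and `∼_W` all coincide. -/
theorem stmt9 (W : MorphismProperty C) [W.ContainsIdentities]
    [W.HasTwoOutOfThreeProperty] (hsg : SplitGenerated W)
    {X Y : C} (f g : X ⟶ Y) :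
    (leastCong (Rl W) f g ↔ W.Q.map f = W.Q.map g) ∧
    (leastCong (Rr W) f g ↔ W.Q.map f = W.Q.map g) :=
  ⟨leastCong_iff_Q_map_eq (fun _ _ _ _ h => map_eq_of_Rl W.Q_inverts h)
      (isInvertedBy_quotient_functor hsg _ fun _ _ _ _ _ hp hip => Rl_retraction_comp_self W hp hip)
      f g,
    leastCong_iff_Q_map_eq (fun _ _ _ _ h => map_eq_of_Rr W.Q_inverts h)
      (isInvertedBy_quotient_functor hsg _ fun _ _ _ _ hi _ hip => Rr_retraction_comp_self W hi hip)
      f g⟩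
end

section
/- Let (C, W) be a category with weak equivalences satisfying the 'common fork' condition. Then the relation R_ℓ^c is transitive (hence an equivalence relation, being reflexive and symmetric), where f R_ℓ^c g iff there exists a commutative diagram with arrows α : A → C, σ : Ã → C a weak equivalence, ∂₀, ∂₁ : A → Ã with σ∂₀ = σ∂₁ = α, and h : Ã → B with h∂₀ = f, h∂₁ = g. -/
open CategoryTheory

variable {C : Type*} [Category C]

/-- `f R_ℓ^c g`: there is a left homotopy diagram through a weak equivalence `σ`. -/
def RlC (W : MorphismProperty C) : HomRel C :=
  fun {A B} f g => ∃ (Z At : C) (α : A ⟶ Z) (σ : At ⟶ Z) (d0 d1 : A ⟶ At) (h : At ⟶ B),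
    W σ ∧ d0 ≫ σ = α ∧ d1 ≫ σ = α ∧ d0 ≫ h = f ∧ d1 ≫ h = g

/-- `f R_r^c g`: there is a right homotopy diagram through a weak equivalence `s`. -/
def RrC (W : MorphismProperty C) : HomRel C :=
  fun {A B} f g => ∃ (Z Bt : C) (β : Z ⟶ B) (s : Z ⟶ Bt) (d0 d1 : Bt ⟶ B) (k : A ⟶ Bt),
    W s ∧ s ≫ d0 = β ∧ s ≫ d1 = β ∧ k ≫ d0 = f ∧ k ≫ d1 = g

/-- The "common fork" condition, left version: two pairs of `R_ℓ^c`-related arrows admit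
homotopies with respect to a common fork of weak equivalences (both `α` and `σ` in `W`). -/
def CommonForkLeft (W : MorphismProperty C) : Prop :=
  ∀ {A B : C} (f g f' g' : A ⟶ B), RlC W f g → RlC W f' g' →
    ∃ (Z At : C) (α : A ⟶ Z) (σ : At ⟶ Z) (d0 d1 : A ⟶ At),
      W σ ∧ W α ∧ d0 ≫ σ = α ∧ d1 ≫ σ = α ∧
      ∃ (h h' : At ⟶ B), d0 ≫ h = f ∧ d1 ≫ h = g ∧ d0 ≫ h' = f' ∧ d1 ≫ h' = g'

/-- The "common fork" condition, right version. -/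
def CommonForkRight (W : MorphismProperty C) : Prop :=
  ∀ {A B : C} (f g f' g' : A ⟶ B), RrC W f g → RrC W f' g' →
    ∃ (Z Bt : C) (β : Z ⟶ B) (s : Z ⟶ Bt) (d0 d1 : Bt ⟶ B),
      W s ∧ W β ∧ s ≫ d0 = β ∧ s ≫ d1 = β ∧
      ∃ (k k' : A ⟶ Bt), k ≫ d0 = f ∧ k ≫ d1 = g ∧ k' ≫ d0 = f' ∧ k' ≫ d1 = g'

/-
Applying the left common fork to the pairs `(f, f)` and `(f, g)` yields a left homotopy
from `f` to `g` whose `∂₀` is a weak equivalence by two-out-of-three (as `σ` and `α = ∂₀ ≫ σ`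
are); read the other way round it is a right homotopy from `f` to `g`. Applying the right common
fork to right homotopies `f₂ ~ f₁` and `f₂ ~ f₃` gives `k, k'` with `k ≫ d₀ = f₂ = k' ≫ d₀` and
`d₀` a weak equivalence, and then `d₀` serves as `σ` in a left homotopy `k ≫ d₁ ~ k' ≫ d₁`,
i.e. `f₁ ~ f₃`.
-/

namespace RlC

variable {W : MorphismProperty C}

lemma refl [W.ContainsIdentities] {A B : C} (f : A ⟶ B) : RlC W f f :=
  ⟨A, A, 𝟙 A, 𝟙 A, 𝟙 A, 𝟙 A, f, W.id_mem A, Category.id_comp _, Category.id_comp _,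
    Category.id_comp f, Category.id_comp f⟩

lemma symm {A B : C} {f g : A ⟶ B} (hfg : RlC W f g) : RlC W g f := by
  obtain ⟨Z, At, α, σ, d0, d1, h, hσ, h0, h1, hf, hg⟩ := hfg
  exact ⟨Z, At, α, σ, d1, d0, h, hσ, h1, h0, hg, hf⟩

lemma comp_of_comp_eq {A At Z B : C} {σ : At ⟶ Z} (hσ : W σ) {d0 d1 : A ⟶ At}
    (hd : d0 ≫ σ = d1 ≫ σ) (h : At ⟶ B) : RlC W (d0 ≫ h) (d1 ≫ h) :=
  ⟨Z, At, d0 ≫ σ, σ, d0, d1, h, hσ, rfl, hd.symm, rfl, rfl⟩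

lemma rrC [W.ContainsIdentities] [W.HasTwoOutOfThreeProperty] (hl : CommonForkLeft W)
    {A B : C} {f g : A ⟶ B} (hfg : RlC W f g) : RrC W f g := by
  obtain ⟨_, At, _, σ, d0, d1, hσ, hα, hd0σ, -, h, h', h0f, h1f, h0f', h1g⟩ :=
    hl f f f g (refl f) hfg
  have hd0 : W d0 := W.of_postcomp d0 σ hσ (hd0σ ▸ hα)
  exact ⟨A, At, f, d0, h, h', d1, hd0, h0f, h0f', h1f, h1g⟩

end RlC

/-- Proposition 3.24: if `(C, W)` satisfies the "common fork" condition then `R_ℓ^c`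
is transitive. -/
theorem stmt11 (W : MorphismProperty C) [W.ContainsIdentities]
    [W.HasTwoOutOfThreeProperty] (hl : CommonForkLeft W) (hr : CommonForkRight W)
    {A B : C} (f₁ f₂ f₃ : A ⟶ B) (h12 : RlC W f₁ f₂) (h23 : RlC W f₂ f₃) :
    RlC W f₁ f₃ := by
  obtain ⟨_, Bt, _, s, e0, e1, hs, hβ, hse0, -, k, k', hk0, hk1, hk0', hk1'⟩ :=
    hr f₂ f₁ f₂ f₃ (h12.symm.rrC hl) (h23.rrC hl)
  have he0 : W e0 := W.of_precomp s e0 hs (hse0 ▸ hβ)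
  have hkk' : k ≫ e0 = k' ≫ e0 := hk0.trans hk0'.symm
  simpa only [hk1, hk1'] using RlC.comp_of_comp_eq he0 hkk' e1
end

section
/- Let (C, W) be a homotopical category (weak equivalences contain identities, satisfy two-out-of-three, and weak invertibility: if fg ∈ W and hf ∈ W then f ∈ W) which is split-generated and satisfies the 'fork' condition. Then (C, W) is saturated: any arrow f with γf an isomorphism in Ho(C) is a weak equivalence. -/
open CategoryTheory

variable {C : Type*} [Category C]

/-- The "fork" condition: left homotopy diagrams may be chosen with `α` also a weak
equivalence, and dually. -/
def ForkCondition (W : MorphismProperty C) : Prop :=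
  (∀ {A B : C} (f g : A ⟶ B), RlC W f g →
    ∃ (Z At : C) (α : A ⟶ Z) (σ : At ⟶ Z) (d0 d1 : A ⟶ At) (h : At ⟶ B),
      W σ ∧ W α ∧ d0 ≫ σ = α ∧ d1 ≫ σ = α ∧ d0 ≫ h = f ∧ d1 ≫ h = g) ∧
  (∀ {A B : C} (f g : A ⟶ B), RrC W f g →
    ∃ (Z Bt : C) (β : Z ⟶ B) (s : Z ⟶ Bt) (d0 d1 : Bt ⟶ B) (k : A ⟶ Bt),
      W s ∧ W β ∧ s ≫ d0 = β ∧ s ≫ d1 = β ∧ k ≫ d0 = f ∧ k ≫ d1 = g)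

/-- Proposition 3.28: a split-generated homotopical category satisfying the "fork"
condition is saturated: any arrow inverted by `γ : C ⥤ Ho(C)` is a weak equivalence. -/
theorem stmt12 (W : MorphismProperty C) [W.ContainsIdentities]
    [W.HasTwoOutOfThreeProperty]
    (hinv : ∀ {X Y Z T : C} (f : X ⟶ Y) (g : Z ⟶ X) (h : Y ⟶ T),
      W (g ≫ f) → W (f ≫ h) → W f)
    (hsg : SplitGenerated W) (hfork : ForkCondition W)
    {X Y : C} (f : X ⟶ Y) (hiso : IsIso (W.Q.map f)) : W f := by
  classical
  -- The homotopy relation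
  set R : HomRel C := fun {A B} a b => RlC W a b ∨ RrC W a b with hR
  -- R is stable under whiskering
  have hwhisk : ∀ {A A' B B' : C} (u : A' ⟶ A) (v : B ⟶ B') (a b : A ⟶ B),
      R a b → R (u ≫ a ≫ v) (u ≫ b ≫ v) := by
    rintro A A' B B' u v a b (⟨Z, At, α, σ, d0, d1, h, hσ, h0, h1, hf, hg⟩ |
      ⟨Z, Bt, β, s, d0, d1, k, hs, h0, h1, hf, hg⟩)
    · exact Or.inl ⟨Z, At, u ≫ α, σ, u ≫ d0, u ≫ d1, h ≫ v, hσ,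
        by rw [Category.assoc, h0], by rw [Category.assoc, h1],
        by simp [← hf], by simp [← hg]⟩
    · exact Or.inr ⟨Z, Bt, β ≫ v, s, d0 ≫ v, d1 ≫ v, u ≫ k, hs,
        by rw [← Category.assoc, h0], by rw [← Category.assoc, h1],
        by simp [← hf], by simp [← hg]⟩
  -- R-related morphisms are simultaneously in W or not, by the fork condition
  have hRW : ∀ {A B : C} (a b : A ⟶ B), R a b → (W a ↔ W b) := by
    rintro A B a b (h | h)
    · obtain ⟨Z, At, α, σ, d0, d1, h, hσ, hα, h0, h1, hf, hg⟩ := hfork.1 a b h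
      have hd0 : W d0 := W.of_postcomp d0 σ hσ (by rw [h0]; exact hα)
      have hd1 : W d1 := W.of_postcomp d1 σ hσ (by rw [h1]; exact hα)
      constructor
      · intro hw
        have hh : W h := W.of_precomp d0 h hd0 (by rw [hf]; exact hw)
        rw [← hg]; exact W.comp_mem _ _ hd1 hh
      · intro hw
        have hh : W h := W.of_precomp d1 h hd1 (by rw [hg]; exact hw)
        rw [← hf]; exact W.comp_mem _ _ hd0 hh
    · obtain ⟨Z, Bt, β, s, d0, d1, k, hs, hβ, h0, h1, hf, hg⟩ := hfork.2 a b h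
      have hd0 : W d0 := W.of_precomp s d0 hs (by rw [h0]; exact hβ)
      have hd1 : W d1 := W.of_precomp s d1 hs (by rw [h1]; exact hβ)
      constructor
      · intro hw
        have hh : W k := W.of_postcomp k d0 hd0 (by rw [hf]; exact hw)
        rw [← hg]; exact W.comp_mem _ _ hh hd1
      · intro hw
        have hh : W k := W.of_postcomp k d1 hd1 (by rw [hg]; exact hw)
        rw [← hf]; exact W.comp_mem _ _ hh hd0
  -- hence the same for the comp-closure and its equivalence closure
  have hCW : ∀ {A B : C} (a b : A ⟶ B), Relation.EqvGen (@HomRel.CompClosure C _ R A B) a b →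
      (W a ↔ W b) := by
    intro A B a b h
    induction h with
    | rel x y h =>
      obtain ⟨_, _, u, m₁, m₂, v, hm⟩ := h
      exact hRW _ _ (hwhisk u v m₁ m₂ hm)
    | refl x => exact Iff.rfl
    | symm x y _ ih => exact ih.symm
    | trans x y z _ _ ih₁ ih₂ => exact ih₁.trans ih₂
  -- The quotient functor inverts W
  let F : C ⥤ CategoryTheory.Quotient R := Quotient.functor R
  have hFinv : W.IsInvertedBy F := by
    have key : ∀ {A B : C} (w : A ⟶ B), SplitGenChain W w → IsIso (F.map w) := by
      intro A B w hchain
      induction hchain with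
      | of g hW hs =>
        rcases hs with h | h
        · -- split mono: retraction ρ, g ≫ ρ = 𝟙, and ρ ≫ g ~ 𝟙 via RrC
          obtain ⟨ρ, hρ⟩ := h.exists_splitMono
          refine ⟨⟨F.map ρ, ?_, ?_⟩⟩
          · rw [← F.map_comp, hρ, F.map_id]
          · rw [← F.map_comp, ← F.map_id]
            exact CategoryTheory.Quotient.sound R (Or.inr ⟨_, _, g, g, ρ ≫ g, 𝟙 _, 𝟙 _, hW,
              by rw [← Category.assoc, hρ, Category.id_comp], Category.comp_id _,
              Category.id_comp _, Category.id_comp _⟩)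
        · -- split epi: section s, s ≫ g = 𝟙, and g ≫ s ~ 𝟙 via RlC
          obtain ⟨s, hsec⟩ := h.exists_splitEpi
          refine ⟨⟨F.map s, ?_, ?_⟩⟩
          · rw [← F.map_comp, ← F.map_id]
            exact CategoryTheory.Quotient.sound R (Or.inl ⟨_, _, g, g, g ≫ s, 𝟙 _, 𝟙 _, hW,
              by rw [Category.assoc, hsec, Category.comp_id], Category.id_comp _,
              Category.comp_id _, Category.comp_id _⟩)
          · rw [← F.map_comp, hsec, F.map_id]
      | comp _ _ ih₁ ih₂ =>
        rw [F.map_comp]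
        exact IsIso.comp_isIso' ih₁ ih₂
    intro A B w hw
    exact key w (hsg w hw)
  -- lift F along the localization; conclude F.map f is an iso
  have hfac := CategoryTheory.Localization.Construction.fac F hFinv
  have hFiso : IsIso (F.map f) := by
    haveI h0 : IsIso ((Localization.Construction.lift F hFinv).map (W.Q.map f)) :=
      inferInstance
    haveI h1 : IsIso ((W.Q ⋙ Localization.Construction.lift F hFinv).map f) := h0
    rw [Functor.congr_hom hfac.symm f]
    infer_instance
  -- extract an inverse g of F.map f, coming from C by fullness
  obtain ⟨g, hg⟩ := (Quotient.full_functor R).map_surjective (inv (F.map f))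
  have h1 : F.map (f ≫ g) = F.map (𝟙 X) := by
    rw [F.map_comp, hg, IsIso.hom_inv_id, F.map_id]
  have h2 : F.map (g ≫ f) = F.map (𝟙 Y) := by
    rw [F.map_comp, hg, IsIso.inv_hom_id, F.map_id]
  have e1 : W (f ≫ g) :=
    (hCW _ _ (Quot.eqvGen_exact h1)).2 (MorphismProperty.id_mem W X)
  have e2 : W (g ≫ f) :=
    (hCW _ _ (Quot.eqvGen_exact h2)).2 (MorphismProperty.id_mem W Y)
  exact hinv f g g e2 e1
end

section
/- Let (C, W) satisfy the 'fork' condition. If f ∼_ℓ g (f and g are related by the least congruence containing R_ℓ^c), then f is a weak equivalence if and only if g is a weak equivalence. -/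
/-!
Given a fork diagram with `α = d₀ ≫ σ = d₁ ≫ σ` and `σ`, `α` weak equivalences, two-out-of-three
makes `d₀` and `d₁` weak equivalences, hence `d₀ ≫ h ∈ W ↔ h ∈ W ↔ d₁ ≫ h ∈ W`. The relation
`R_ℓ^c` is already stable under pre- and postcomposition, so `∼_ℓ` is its equivalence closure,
and membership in `W` is invariant along each step.
-/

open CategoryTheory

variable {C : Type*} [Category C]

/-- The left "fork" condition: left homotopy diagrams may be chosen with `α` also a weak
equivalence. -/
def ForkLeft (W : MorphismProperty C) : Prop :=
  ∀ {A B : C} (f g : A ⟶ B), RlC W f g →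
    ∃ (Z At : C) (α : A ⟶ Z) (σ : At ⟶ Z) (d0 d1 : A ⟶ At) (h : At ⟶ B),
      W σ ∧ W α ∧ d0 ≫ σ = α ∧ d1 ≫ σ = α ∧ d0 ≫ h = f ∧ d1 ≫ h = g

/-- `∼_ℓ`: the least congruence containing `R_ℓ^c`, i.e. the kernel of the quotient
functor `C ⥤ C/R_ℓ^c`. -/
def simL (W : MorphismProperty C) : HomRel C :=
  fun {_ _} f g =>
    (CategoryTheory.Quotient.functor (RlC W)).map f =
      (CategoryTheory.Quotient.functor (RlC W)).map g

namespace RlC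

variable {W : MorphismProperty C}

instance : HomRel.IsStableUnderPrecomp (RlC W) where
  comp_left i _ _ := by
    rintro ⟨Z, At, α, σ, d0, d1, h, hσ, h0, h1, rfl, rfl⟩
    exact ⟨Z, At, i ≫ α, σ, i ≫ d0, i ≫ d1, h, hσ, by simp [h0], by simp [h1], by simp, by simp⟩

instance : HomRel.IsStableUnderPostcomp (RlC W) where
  comp_right j := by
    rintro ⟨Z, At, α, σ, d0, d1, h, hσ, h0, h1, rfl, rfl⟩
    exact ⟨Z, At, α, σ, d0, d1, h ≫ j, hσ, h0, h1, by simp, by simp⟩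

theorem mem_iff [W.HasTwoOutOfThreeProperty] (hfork : ForkLeft W) {A B : C} {f g : A ⟶ B}
    (hfg : RlC W f g) : W f ↔ W g := by
  obtain ⟨Z, At, α, σ, d0, d1, h, hσ, hα, h0, h1, rfl, rfl⟩ := hfork f g hfg
  have hd0 : W d0 := W.of_postcomp d0 σ hσ (h0 ▸ hα)
  have hd1 : W d1 := W.of_postcomp d1 σ hσ (h1 ▸ hα)
  exact (W.precomp_iff d0 h hd0).trans (W.precomp_iff d1 h hd1).symm

end RlC

theorem simL_iff_eqvGen (W : MorphismProperty C) {A B : C} (f g : A ⟶ B) :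
    simL W f g ↔ Relation.EqvGen (@RlC C _ W A B) f g := by
  rw [← HomRel.compClosure_eq_self (RlC W)]
  exact Quotient.functor_homRel_eq_compClosure_eqvGen (RlC W) f g

theorem CategoryTheory.MorphismProperty.mem_iff_of_eqvGen (P : MorphismProperty C)
    {r : HomRel C} (hr : ∀ ⦃X Y : C⦄ ⦃f g : X ⟶ Y⦄, r f g → (P f ↔ P g))
    {X Y : C} {f g : X ⟶ Y} (h : Relation.EqvGen (@r X Y) f g) : P f ↔ P g := by
  induction h with
  | rel _ _ hxy => exact hr hxy
  | refl => rfl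
  | symm _ _ _ ih => exact ih.symm
  | trans _ _ _ _ _ ih₁ ih₂ => exact ih₁.trans ih₂

theorem stmt13_general (W : MorphismProperty C)
    [W.HasTwoOutOfThreeProperty] (hfork : ForkLeft W)
    {A B : C} (f g : A ⟶ B) (h : simL W f g) : W f ↔ W g :=
  W.mem_iff_of_eqvGen (fun _ _ _ _ => RlC.mem_iff hfork) ((simL_iff_eqvGen W f g).1 h)

/-- Remark 3.26: if `(C, W)` satisfies the "fork" condition and `f ∼_ℓ g`, then `f` is a
weak equivalence iff `g` is a weak equivalence. -/
theorem stmt13 (W : MorphismProperty C) [W.ContainsIdentities]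
    [W.HasTwoOutOfThreeProperty] (hfork : ForkLeft W)
    {A B : C} (f g : A ⟶ B) (h : simL W f g) : W f ↔ W g :=
  stmt13_general W hfork f g h
end

section
/- Let (C, W) be a category with weak equivalences, C₀ a subcategory, and r : C ⤳ C₀ a pointwise left deformation (for each X a weak equivalence θ_X : rX → X with rX ∈ C₀, and for each f : X → Y an arrow rf : rX → rY with θ_Y ∘ rf = f ∘ θ_X). Then in Ho(C), the class of any zigzag P : X ⇝ Y (backward arrows in W) equals the class of the zigzag X ← rX —rP→ rY → Y, where rP is obtained by applying r to each arrow of P. Consequently the functor γ_r : C → Ho(C, r) (identity on objects, f ↦ [rf]) is a localization of C at W, where Ho(C, r) has objects those of C and arrows X → Y the Ho(C)-classes of zigzags of arrows of C₀ from rX to rY. -/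
open CategoryTheory

variable {C : Type*} [Category C]

/-- Zigzags of arrows of `C` in which the backward arrows are weak equivalences. -/
inductive Zig (W : MorphismProperty C) : C → C → Type _
  | nil (X : C) : Zig W X X
  | fwd {X Y Z : C} (f : X ⟶ Y) (p : Zig W Y Z) : Zig W X Z
  | bwd {X Y Z : C} (f : Y ⟶ X) (hf : W f) (p : Zig W Y Z) : Zig W X Z

/-- The class of a zigzag in the localization `Ho(C)`. -/
noncomputable def Zig.eval (W : MorphismProperty C) :
    {X Y : C} → Zig W X Y → (W.Q.obj X ⟶ W.Q.obj Y)
  | _, _, .nil X => 𝟙 (W.Q.obj X)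
  | _, _, .fwd f p => W.Q.map f ≫ Zig.eval W p
  | _, _, .bwd f hf p => (Localization.isoOfHom W.Q W f hf).inv ≫ Zig.eval W p

/-- All objects of the zigzag lie in the (full) subcategory determined by `P₀`. -/
def Zig.allIn (W : MorphismProperty C) (P₀ : C → Prop) :
    {X Y : C} → Zig W X Y → Prop
  | X, _, .nil _ => P₀ X
  | X, _, .fwd _ p => P₀ X ∧ Zig.allIn W P₀ p
  | X, _, .bwd _ _ p => P₀ X ∧ Zig.allIn W P₀ p

/-- Applying a pointwise deformation `r` to a zigzag, arrow by arrow. -/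
def Zig.apply (W : MorphismProperty C) (robj : C → C)
    (rmap : ∀ {X Y : C}, (X ⟶ Y) → (robj X ⟶ robj Y))
    (hr : ∀ {X Y : C} (f : X ⟶ Y), W f → W (rmap f)) :
    {X Y : C} → Zig W X Y → Zig W (robj X) (robj Y)
  | _, _, .nil X => .nil (robj X)
  | _, _, .fwd f p => .fwd (rmap f) (Zig.apply W robj rmap hr p)
  | _, _, .bwd f hf p => .bwd (rmap f) (hr f hf) (Zig.apply W robj rmap hr p)

section Aux

variable (W : MorphismProperty C)

/-- Concatenation of zigzags. -/
def Zig.comp : {X Y Z : C} → Zig W X Y → Zig W Y Z → Zig W X Z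
  | _, _, _, .nil _, q => q
  | _, _, _, .fwd f p, q => .fwd f (Zig.comp p q)
  | _, _, _, .bwd f hf p, q => .bwd f hf (Zig.comp p q)

lemma Zig.eval_comp : ∀ {X Y Z : C} (p : Zig W X Y) (q : Zig W Y Z),
    Zig.eval W (Zig.comp W p q) = Zig.eval W p ≫ Zig.eval W q
  | _, _, _, .nil _, q => by simp [Zig.comp, Zig.eval]
  | _, _, _, .fwd f p, q => by simp [Zig.comp, Zig.eval, Zig.eval_comp p q]
  | _, _, _, .bwd f hf p, q => by simp [Zig.comp, Zig.eval, Zig.eval_comp p q]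

lemma Zig.allIn_comp (P₀ : C → Prop) :
    ∀ {X Y Z : C} (p : Zig W X Y) (q : Zig W Y Z),
    Zig.allIn W P₀ p → Zig.allIn W P₀ q → Zig.allIn W P₀ (Zig.comp W p q)
  | _, _, _, .nil _, q, _, hq => hq
  | _, _, _, .fwd f p, q, hp, hq => ⟨hp.1, Zig.allIn_comp P₀ p q hp.2 hq⟩
  | _, _, _, .bwd f hf p, q, hp, hq => ⟨hp.1, Zig.allIn_comp P₀ p q hp.2 hq⟩

lemma Zig.allIn_apply (P₀ : C → Prop) (robj : C → C)
    (rmap : ∀ {X Y : C}, (X ⟶ Y) → (robj X ⟶ robj Y))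
    (hr : ∀ {X Y : C} (f : X ⟶ Y), W f → W (rmap f))
    (hobj : ∀ X : C, P₀ (robj X)) :
    ∀ {X Y : C} (p : Zig W X Y), Zig.allIn W P₀ (Zig.apply W robj rmap hr p)
  | _, _, .nil X => hobj X
  | _, _, .fwd f p => ⟨hobj _, Zig.allIn_apply P₀ robj rmap hr hobj p⟩
  | _, _, .bwd f hf p => ⟨hobj _, Zig.allIn_apply P₀ robj rmap hr hobj p⟩

/-- Every morphism in the localization is the class of a zigzag. -/
lemma Zig.surj {X Y : C} (φ : W.Q.obj X ⟶ W.Q.obj Y) :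
    ∃ p : Zig W X Y, Zig.eval W p = φ := by
  let P : MorphismProperty W.Localization := fun A B g =>
    ∃ p : Zig W A.as.obj B.as.obj, Zig.eval W p = g
  have hcomp : P.IsStableUnderComposition := by
    constructor
    rintro ⟨⟨A⟩⟩ ⟨⟨B⟩⟩ ⟨⟨D⟩⟩ f g ⟨p, hp⟩ ⟨q, hq⟩
    exact ⟨Zig.comp W p q, by rw [Zig.eval_comp, hp, hq]; rfl⟩
  have := Localization.Construction.morphismProperty_eq_top P
    (fun A B f => ⟨Zig.fwd f (Zig.nil B), by simp [Zig.eval]; exact Category.comp_id _⟩)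
    (fun A B w hw => ⟨Zig.bwd w hw (Zig.nil A), by
      simp [Zig.eval, Localization.Construction.wInv_eq_isoOfHom_inv]; exact Category.comp_id _⟩)
  have hφ : P φ := by rw [this]; trivial
  exact hφ

end Aux

lemma Zig.eval_apply (W : MorphismProperty C)
    (robj : C → C) (rmap : ∀ {X Y : C}, (X ⟶ Y) → (robj X ⟶ robj Y))
    (θ : ∀ X : C, robj X ⟶ X) (hθ : ∀ X : C, W (θ X))
    (hsq : ∀ {X Y : C} (f : X ⟶ Y), rmap f ≫ θ Y = θ X ≫ f)
    (hr : ∀ {X Y : C} (f : X ⟶ Y), W f → W (rmap f)) :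
    ∀ {X Y : C} (p : Zig W X Y),
      Zig.eval W p = (Localization.isoOfHom W.Q W (θ X) (hθ X)).inv ≫
        Zig.eval W (Zig.apply W robj rmap hr p) ≫ W.Q.map (θ Y)
  | _, _, .nil X => by
      simp [Zig.eval, Zig.apply, Localization.isoOfHom_inv_hom_id]
  | X, Z, .fwd (Y := Y) f p => by
      have hmap : W.Q.map (rmap f) ≫ W.Q.map (θ Y) = W.Q.map (θ X) ≫ W.Q.map f := by
        rw [← Functor.map_comp, ← Functor.map_comp, hsq]
      have hinv : W.Q.map f ≫ (Localization.isoOfHom W.Q W (θ Y) (hθ Y)).inv =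
          (Localization.isoOfHom W.Q W (θ X) (hθ X)).inv ≫ W.Q.map (rmap f) := by
        rw [Iso.eq_inv_comp, ← Category.assoc, Iso.comp_inv_eq,
          Localization.isoOfHom_hom, Localization.isoOfHom_hom]
        exact hmap.symm
      rw [Zig.eval, Zig.apply, Zig.eval,
        Zig.eval_apply W robj rmap θ hθ (fun f => hsq f) hr p]
      simp only [Category.assoc, ← Category.assoc (W.Q.map f), hinv]
  | X, Z, .bwd (Y := Y) f hf p => by
      have e : (Localization.isoOfHom W.Q W (rmap f) (hr f hf) ≪≫
            Localization.isoOfHom W.Q W (θ X) (hθ X)) =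
          (Localization.isoOfHom W.Q W (θ Y) (hθ Y) ≪≫
            Localization.isoOfHom W.Q W f hf) := by
        ext
        simp only [Iso.trans_hom, Localization.isoOfHom_hom, ← Functor.map_comp]
        rw [hsq]
      have hinv : (Localization.isoOfHom W.Q W f hf).inv ≫
            (Localization.isoOfHom W.Q W (θ Y) (hθ Y)).inv =
          (Localization.isoOfHom W.Q W (θ X) (hθ X)).inv ≫
            (Localization.isoOfHom W.Q W (rmap f) (hr f hf)).inv := by
        have := congrArg Iso.inv e
        simpa [Iso.trans_inv] using this.symm
      rw [Zig.eval, Zig.apply, Zig.eval,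
        Zig.eval_apply W robj rmap θ hθ (fun f => hsq f) hr p]
      simp only [← Category.assoc, hinv]


/-- Lemma 3.38 (zigzagreducidos) and Corollaries 3.40/3.43: for a pointwise left deformation
`r : C ⤳ C₀` (each `θ_X : rX ⟶ X` a weak equivalence, `rX ∈ C₀`, with commuting squares),
the class of any zigzag `P : X ⇝ Y` in `Ho(C)` equals the class of
`X ← rX —rP→ rY → Y`; consequently every arrow `X ⟶ Y` of `Ho(C)` is the class of
a zigzag of arrows of `C₀` from `rX` to `rY`, conjugated by the `θ`s, so that
`γ_r : C ⥤ Ho(C, r)` is a localization of `C` at `W`. -/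
theorem stmt18 (W : MorphismProperty C) [W.ContainsIdentities]
    [W.HasTwoOutOfThreeProperty]
    (P₀ : C → Prop) (robj : C → C)
    (rmap : ∀ {X Y : C}, (X ⟶ Y) → (robj X ⟶ robj Y))
    (hobj : ∀ X : C, P₀ (robj X))
    (θ : ∀ X : C, robj X ⟶ X) (hθ : ∀ X : C, W (θ X))
    (hsq : ∀ {X Y : C} (f : X ⟶ Y), rmap f ≫ θ Y = θ X ≫ f)
    (hr : ∀ {X Y : C} (f : X ⟶ Y), W f → W (rmap f)) :
    (∀ {X Y : C} (p : Zig W X Y),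
      Zig.eval W p = (Localization.isoOfHom W.Q W (θ X) (hθ X)).inv ≫
        Zig.eval W (Zig.apply W robj rmap hr p) ≫ W.Q.map (θ Y)) ∧
    (∀ {X Y : C} (φ : W.Q.obj X ⟶ W.Q.obj Y),
      ∃ z : Zig W (robj X) (robj Y), Zig.allIn W P₀ z ∧
        φ = (Localization.isoOfHom W.Q W (θ X) (hθ X)).inv ≫
          Zig.eval W z ≫ W.Q.map (θ Y)) := by
  refine ⟨fun p => Zig.eval_apply W robj rmap θ hθ (fun f => hsq f) hr p, fun {X Y} φ => ?_⟩
  obtain ⟨p, hp⟩ := Zig.surj W φ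
  exact ⟨Zig.apply W robj rmap hr p, Zig.allIn_apply W P₀ robj rmap hr hobj p,
    by rw [← hp, Zig.eval_apply W robj rmap θ hθ (fun f => hsq f) hr p]⟩
end

section
/- Let r : C → C₀ ⊆ C be a left deformation: a homotopical functor r : C → C with rC ∈ C₀ for all C, together with a natural weak equivalence θ : r ⇒ id_C. Then for arrows f, g of C₀, f ∼_W g (i.e. γf = γg in Ho(C)) implies f ∼_{W₀} g (i.e. γ₀f = γ₀g in Ho(C₀)), and hence the homotopy relations ∼_W and ∼_{W₀} coincide on arrows of C₀. -/
open CategoryTheory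

variable {C : Type*} [Category C]

/-- The restriction `W₀` of `W` to the full subcategory on the objects satisfying `P₀`. -/
def Wres (W : MorphismProperty C) (P₀ : C → Prop) :
    MorphismProperty (ObjectProperty.FullSubcategory P₀) :=
  fun _ _ f => W f.hom

/-- Proposition 3.44 (rhoWyrhoW0): given a left deformation of `C` into a subcategory `C₀`
(a homotopical functor `r : C ⥤ C` landing in `C₀` together with a natural weak equivalence
`θ : r ⟹ id`), for arrows `f, g` of `C₀` we have `f ∼_W g` iff `f ∼_{W₀} g`: the homotopy
relations of `(C, W)` and `(C₀, W₀)` coincide on arrows of `C₀`. -/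
theorem stmt19 (W : MorphismProperty C) [W.ContainsIdentities]
    [W.HasTwoOutOfThreeProperty]
    (P₀ : C → Prop) (r : C ⥤ C)
    (hr : ∀ {X Y : C} (f : X ⟶ Y), W f → W (r.map f))
    (hobj : ∀ X : C, P₀ (r.obj X))
    (θ : r ⟶ 𝟭 C) (hθ : ∀ X : C, W (θ.app X))
    {X Y : C} (hX : P₀ X) (hY : P₀ Y) (f g : X ⟶ Y) :
    W.Q.map f = W.Q.map g ↔
      (Wres W P₀).Q.map (X := ⟨X, hX⟩) (Y := ⟨Y, hY⟩) (ObjectProperty.homMk f) =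
        (Wres W P₀).Q.map (X := ⟨X, hX⟩) (Y := ⟨Y, hY⟩) (ObjectProperty.homMk g) := by
  set W₀ := Wres W P₀ with hW₀
  -- r as a functor into the full subcategory
  let r' : C ⥤ ObjectProperty.FullSubcategory P₀ := ObjectProperty.lift P₀ r hobj
  constructor
  · intro h
    -- F : C ⥤ Ho(C₀) inverts W
    let F : C ⥤ W₀.Localization := r' ⋙ W₀.Q
    have hF : W.IsInvertedBy F := by
      intro A B w hw
      exact Localization.inverts W₀.Q W₀ (r'.map w) (hr w hw)
    let G := Localization.lift F hF W.Q
    have fac := Localization.fac F hF W.Q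
    have hfg : F.map f = F.map g := by
      have n1 := fac.hom.naturality f
      have n2 := fac.hom.naturality g
      simp only [Functor.comp_map] at n1 n2
      rw [← cancel_epi (fac.hom.app X), ← n1, ← n2, h]
    -- so Q₀ (r f) = Q₀ (r g)
    have hfg' : W₀.Q.map (r'.map f) = W₀.Q.map (r'.map g) := hfg
    -- θ components as morphisms in the subcategory
    let θX : (⟨r.obj X, hobj X⟩ : ObjectProperty.FullSubcategory P₀) ⟶ ⟨X, hX⟩ :=
      ObjectProperty.homMk (θ.app X)
    let θY : (⟨r.obj Y, hobj Y⟩ : ObjectProperty.FullSubcategory P₀) ⟶ ⟨Y, hY⟩ :=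
      ObjectProperty.homMk (θ.app Y)
    have hiX : IsIso (W₀.Q.map θX) := Localization.inverts W₀.Q W₀ θX (hθ X)
    have hiY : IsIso (W₀.Q.map θY) := Localization.inverts W₀.Q W₀ θY (hθ Y)
    have natf : r'.map f ≫ θY = θX ≫ ObjectProperty.homMk f :=
      ObjectProperty.hom_ext _ (θ.naturality f)
    have natg : r'.map g ≫ θY = θX ≫ ObjectProperty.homMk g :=
      ObjectProperty.hom_ext _ (θ.naturality g)
    have key : W₀.Q.map θX ≫ W₀.Q.map (X := ⟨X, hX⟩) (Y := ⟨Y, hY⟩) (ObjectProperty.homMk f) =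
        W₀.Q.map θX ≫ W₀.Q.map (X := ⟨X, hX⟩) (Y := ⟨Y, hY⟩) (ObjectProperty.homMk g) := by
      rw [← W₀.Q.map_comp, ← W₀.Q.map_comp, ← natf, ← natg,
        W₀.Q.map_comp, W₀.Q.map_comp, hfg']
    exact (cancel_epi (W₀.Q.map θX)).mp key
  · intro h
    -- G' : C₀ ⥤ Ho(C) inverts W₀
    let G' : ObjectProperty.FullSubcategory P₀ ⥤ W.Localization := ObjectProperty.ι P₀ ⋙ W.Q
    have hG' : W₀.IsInvertedBy G' := by
      intro A B w hw
      exact Localization.inverts W.Q W w.hom hw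
    let H := Localization.lift G' hG' W₀.Q
    have fac := Localization.fac G' hG' W₀.Q
    have n1 := fac.hom.naturality (X := ⟨X, hX⟩) (Y := ⟨Y, hY⟩) (ObjectProperty.homMk f)
    have n2 := fac.hom.naturality (X := ⟨X, hX⟩) (Y := ⟨Y, hY⟩) (ObjectProperty.homMk g)
    simp only [Functor.comp_map] at n1 n2
    have : G'.map (X := ⟨X, hX⟩) (Y := ⟨Y, hY⟩) (ObjectProperty.homMk f) =
        G'.map (X := ⟨X, hX⟩) (Y := ⟨Y, hY⟩) (ObjectProperty.homMk g) := by
      rw [← cancel_epi (fac.hom.app ⟨X, hX⟩), ← n1, ← n2, h]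
    exact this
end
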